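/- arXiv:2403.01264 — 8 statements merged into one kernel-verified Lean document; each statement's English description precedes it below -/
import Mathlib

section
/- Let F be a real polynomial of degree at most 4, let Δx be a real number, and define the corrected numerical flux G(x) = F(x) − (Δx²/24)·F''(x). Then G(Δx/2) − G(−Δx/2) = Δx·F'(0); i.e., the second-derivative correction with coefficient −1/24 renders the centered flux difference an exact evaluation of the flux gradient at the zone center for all polynomials of degree ≤ 4. -/
open Polynomial

/-- Let `F` be a real polynomial of degree at most 4, `Δx : ℝ`, and define the
corrected numerical flux `G(x) = F(x) − (Δx²/24)·F''(x)`.  Then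
`G(Δx/2) − G(−Δx/2) = Δx·F'(0)`. -/
theorem corrected_flux_difference_deg4 (F : ℝ[X]) (hF : F.degree ≤ 4) (Δx : ℝ)
    (G : ℝ → ℝ)
    (hG : ∀ x, G x = F.eval x - (Δx ^ 2 / 24) * (derivative^[2] F).eval x) :
    G (Δx / 2) - G (-Δx / 2) = Δx * (derivative F).eval 0 := by
  have h5 : F.natDegree < 5 := by
    have := Polynomial.natDegree_le_of_degree_le (n := 4) hF
    omega
  have hd1 : (derivative F).natDegree < 5 := by
    have := Polynomial.natDegree_derivative_le F; omega
  have hd2 : (derivative (derivative F)).natDegree < 5 := by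
    have := Polynomial.natDegree_derivative_le (derivative F); omega
  have e0 : ∀ x : ℝ, F.eval x = ∑ i ∈ Finset.range 5, F.coeff i * x ^ i := fun x =>
    Polynomial.eval_eq_sum_range' h5 x
  have e1 : ∀ x : ℝ, (derivative F).eval x = ∑ i ∈ Finset.range 5, (derivative F).coeff i * x ^ i :=
    fun x => Polynomial.eval_eq_sum_range' hd1 x
  have e2 : ∀ x : ℝ, (derivative (derivative F)).eval x
      = ∑ i ∈ Finset.range 5, (derivative (derivative F)).coeff i * x ^ i :=
    fun x => Polynomial.eval_eq_sum_range' hd2 x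
  simp only [hG, Function.iterate_succ, Function.iterate_zero, Function.comp_apply, id_eq]
  rw [e0, e0, e1, e2, e2]
  simp only [Finset.sum_range_succ, Finset.sum_range_zero, Polynomial.coeff_derivative]
  have hc5 : F.coeff 5 = 0 := Polynomial.coeff_eq_zero_of_natDegree_lt h5
  push_cast
  rw [hc5]
  ring
end

section
/- Let F be a real polynomial of degree at most 6, let Δx be a real number, and define G(x) = F(x) − (Δx²/24)·F''(x). Then G(Δx/2) − G(−Δx/2) = Δx·F'(0) − (7/5760)·Δx⁵·F^{(5)}(0); i.e., the third-order corrected numerical flux difference evaluates the flux gradient F'(0) with leading error term −(7/5760)·Δx⁴·F^{(5)}(0). -/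
open Polynomial

/-- Let `F` be a real polynomial of degree at most 6, `Δx : ℝ`, and define
`G(x) = F(x) − (Δx²/24)·F''(x)`.  Then
`G(Δx/2) − G(−Δx/2) = Δx·F'(0) − (7/5760)·Δx⁵·F⁽⁵⁾(0)`. -/
theorem corrected_flux_difference_deg6 (F : ℝ[X]) (hF : F.degree ≤ 6) (Δx : ℝ)
    (G : ℝ → ℝ)
    (hG : ∀ x, G x = F.eval x - (Δx ^ 2 / 24) * (derivative^[2] F).eval x) :
    G (Δx / 2) - G (-Δx / 2) =
      Δx * (derivative F).eval 0 - (7 / 5760) * Δx ^ 5 * (derivative^[5] F).eval 0 := by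
  have hn : F.natDegree < 7 := by
    have h6 : F.natDegree ≤ 6 := Polynomial.natDegree_le_iff_degree_le.mpr hF
    omega
  have hd : ∀ k, (derivative^[k] F).natDegree < 7 := by
    intro k
    induction k with
    | zero => simpa using hn
    | succ k ih =>
      rw [Function.iterate_succ_apply']
      exact lt_of_le_of_lt (Polynomial.natDegree_derivative_le _) (by omega)
  have he : ∀ k x, (derivative^[k] F).eval x =
      ∑ i ∈ Finset.range 7, (derivative^[k] F).coeff i * x ^ i := fun k x =>
    Polynomial.eval_eq_sum_range' (hd k) x
  have h0 : ∀ x, F.eval x = ∑ i ∈ Finset.range 7, F.coeff i * x ^ i := fun x =>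
    Polynomial.eval_eq_sum_range' hn x
  have h7 : F.coeff 7 = 0 := Polynomial.coeff_eq_zero_of_natDegree_lt (by omega)
  rw [hG, hG, he 2, he 2, show (derivative F).eval 0 = _ from he 1 0, he 5, h0, h0]
  simp only [Finset.sum_range_succ, Finset.sum_range_zero,
    Function.iterate_succ_apply', Function.iterate_zero_apply,
    Polynomial.coeff_derivative, h7]
  push_cast
  ring
end

section
/- Let F be a real polynomial of degree at most 6, let Δx be a real number, and define the fifth-order AFD-WENO numerical flux G(x) = F(x) − (Δx²/24)·F''(x) + (7/5760)·Δx⁴·F^{(4)}(x). Then G(Δx/2) − G(−Δx/2) = Δx·F'(0) exactly. -/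
open Polynomial

/-- Let `F` be a real polynomial of degree at most 6, `Δx : ℝ`, and define the fifth-order
AFD-WENO numerical flux `G(x) = F(x) − (Δx²/24)·F''(x) + (7/5760)·Δx⁴·F⁽⁴⁾(x)`.
Then `G(Δx/2) − G(−Δx/2) = Δx·F'(0)` exactly. -/
theorem afdweno5_flux_difference (F : ℝ[X]) (hF : F.degree ≤ 6) (Δx : ℝ)
    (G : ℝ → ℝ)
    (hG : ∀ x, G x = F.eval x - (Δx ^ 2 / 24) * (derivative^[2] F).eval x
        + (7 / 5760) * Δx ^ 4 * (derivative^[4] F).eval x) :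
    G (Δx / 2) - G (-Δx / 2) = Δx * (derivative F).eval 0 := by
  have hd : F.natDegree < 7 := lt_of_le_of_lt (natDegree_le_iff_degree_le.mpr hF) (by norm_num)
  have hFeq : F = ∑ i ∈ Finset.range 7, monomial i (F.coeff i) := F.as_sum_range' 7 hd
  rw [hG, hG, hFeq]
  simp only [Function.iterate_succ, Function.iterate_zero, Function.comp_apply, id_eq,
    Finset.sum_range_succ, Finset.sum_range_zero, derivative_add, derivative_mul, derivative_C,
    derivative_X_pow, derivative_zero, derivative_one, derivative_monomial, eval_add, eval_mul,
    eval_C, eval_pow, eval_X, eval_zero, eval_one, eval_monomial, map_add, map_mul]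
  norm_num
  ring
end

section
/- Let a, b, c, d be real numbers. Then the identity (F + a·F' + b·F'' + c·F''' + d·F^{(4)})(1/2) − (F + a·F' + b·F'' + c·F''' + d·F^{(4)})(−1/2) = F'(0) holds for every real polynomial F of degree at most 5 if and only if a = 0, b = −1/24, c = 0, and d = 7/5760. -/
open Polynomial

/-- The identity
`(F + a·F' + b·F'' + c·F''' + d·F⁽⁴⁾)(1/2) − (F + a·F' + b·F'' + c·F''' + d·F⁽⁴⁾)(−1/2) = F'(0)`
holds for every real polynomial `F` of degree at most 5 if and only if
`a = 0`, `b = −1/24`, `c = 0` and `d = 7/5760`. -/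
theorem afdweno5_coefficients (a b c d : ℝ) :
    (∀ F : ℝ[X], F.degree ≤ 5 →
      (F + C a * derivative F + C b * derivative^[2] F + C c * derivative^[3] F
          + C d * derivative^[4] F).eval (1 / 2)
        - (F + C a * derivative F + C b * derivative^[2] F + C c * derivative^[3] F
          + C d * derivative^[4] F).eval (-1 / 2)
      = (derivative F).eval 0)
    ↔ (a = 0 ∧ b = -1 / 24 ∧ c = 0 ∧ d = 7 / 5760) := by
  constructor
  · intro h
    have h2 := h (X ^ 2) (by rw [degree_X_pow]; norm_num)
    have h3 := h (X ^ 3) (by rw [degree_X_pow]; norm_num)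
    have h4 := h (X ^ 4) (by rw [degree_X_pow]; norm_num)
    have h5 := h (X ^ 5) (by rw [degree_X_pow]; norm_num)
    simp [Function.iterate_succ_apply, derivative_X_pow] at h2 h3 h4 h5
    norm_num at h2 h3 h4 h5
    subst h2
    norm_num at h3 h4 h5 ⊢
    exact ⟨by linarith, h4, by linarith⟩
  · rintro ⟨rfl, rfl, rfl, rfl⟩ F hF
    have hnd : F.natDegree < 6 := by
      have := natDegree_le_iff_degree_le.mpr hF
      exact Nat.lt_succ_of_le this
    rw [F.as_sum_range' 6 hnd]
    simp [Finset.sum_range_succ, Function.iterate_succ_apply, derivative_monomial, eval_monomial]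
    ring
end

section
/- Let F be a real polynomial of degree at most 8, let Δx be a real number, and define the seventh-order AFD-WENO numerical flux G(x) = F(x) − (Δx²/24)·F''(x) + (7/5760)·Δx⁴·F^{(4)}(x) − (31/967680)·Δx⁶·F^{(6)}(x). Then G(Δx/2) − G(−Δx/2) = Δx·F'(0) exactly. -/
open Polynomial

/-- Let `F` be a real polynomial of degree at most 8, `Δx : ℝ`, and define the seventh-order
AFD-WENO numerical flux
`G(x) = F(x) − (Δx²/24)·F''(x) + (7/5760)·Δx⁴·F⁽⁴⁾(x) − (31/967680)·Δx⁶·F⁽⁶⁾(x)`.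
Then `G(Δx/2) − G(−Δx/2) = Δx·F'(0)` exactly. -/
theorem afdweno7_flux_difference (F : ℝ[X]) (hF : F.degree ≤ 8) (Δx : ℝ)
    (G : ℝ → ℝ)
    (hG : ∀ x, G x = F.eval x - (Δx ^ 2 / 24) * (derivative^[2] F).eval x
        + (7 / 5760) * Δx ^ 4 * (derivative^[4] F).eval x
        - (31 / 967680) * Δx ^ 6 * (derivative^[6] F).eval x) :
    G (Δx / 2) - G (-Δx / 2) = Δx * (derivative F).eval 0 := by
  have h9 : F.natDegree < 9 := Nat.lt_succ_of_le (natDegree_le_iff_degree_le.mpr hF)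
  rw [hG, hG, Polynomial.as_sum_range' F 9 h9]
  simp only [Finset.sum_range_succ, Finset.sum_range_zero, Function.iterate_succ_apply',
    Function.iterate_zero_apply, map_add, map_zero, derivative_monomial, eval_add, eval_zero,
    eval_monomial]
  push_cast
  ring
end

section
/- Let F be a real polynomial of degree at most 10, let Δx be a real number, and define the ninth-order AFD-WENO numerical flux G(x) = F(x) − (Δx²/24)·F''(x) + (7/5760)·Δx⁴·F^{(4)}(x) − (31/967680)·Δx⁶·F^{(6)}(x) + (127/154828800)·Δx⁸·F^{(8)}(x). Then G(Δx/2) − G(−Δx/2) = Δx·F'(0) exactly. -/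
open Polynomial

private lemma iter_deriv_add (k : ℕ) (p q : ℝ[X]) :
    derivative^[k] (p + q) = derivative^[k] p + derivative^[k] q := by
  induction k generalizing p q with
  | zero => simp
  | succ n ih => simp [Function.iterate_succ_apply, derivative_add, ih]

private lemma eval_iter_deriv_monomial (k n : ℕ) (a y : ℝ) :
    eval y (derivative^[k] ((monomial n a) : ℝ[X]))
      = a * (n.descFactorial k) * y ^ (n - k) := by
  rw [← C_mul_X_pow_eq_monomial, iterate_derivative_C_mul, iterate_derivative_X_pow_eq_C_mul]
  simp [mul_assoc]

/-- Let `F` be a real polynomial of degree at most 10, `Δx : ℝ`, and define the ninth-order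
AFD-WENO numerical flux
`G(x) = F(x) − (Δx²/24)·F''(x) + (7/5760)·Δx⁴·F⁽⁴⁾(x) − (31/967680)·Δx⁶·F⁽⁶⁾(x)
        + (127/154828800)·Δx⁸·F⁽⁸⁾(x)`.
Then `G(Δx/2) − G(−Δx/2) = Δx·F'(0)` exactly. -/
theorem afdweno9_flux_difference (F : ℝ[X]) (hF : F.degree ≤ 10) (Δx : ℝ)
    (G : ℝ → ℝ)
    (hG : ∀ x, G x = F.eval x - (Δx ^ 2 / 24) * (derivative^[2] F).eval x
        + (7 / 5760) * Δx ^ 4 * (derivative^[4] F).eval x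
        - (31 / 967680) * Δx ^ 6 * (derivative^[6] F).eval x
        + (127 / 154828800) * Δx ^ 8 * (derivative^[8] F).eval x) :
    G (Δx / 2) - G (-Δx / 2) = Δx * (derivative F).eval 0 := by
  have hnd : F.natDegree < 11 := by
    by_cases h0 : F = 0
    · simp [h0]
    · exact Nat.lt_succ_of_le (natDegree_le_iff_degree_le.mpr (by exact_mod_cast hF))
  have hsum := F.as_sum_range' 11 hnd
  rw [hG, hG, hsum]
  simp only [Finset.sum_range_succ, Finset.sum_range_zero, zero_add, iter_deriv_add,
    eval_add, eval_iter_deriv_monomial, derivative_add, derivative_monomial, eval_monomial]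
  norm_num
  ring
end

section
/- Let u₋₃, u₋₂, u₋₁, u₀, u₁, u₂, u₃ be real numbers and define the degree-6 polynomial P(x) = u_pt + u_x·L₁(x) + u_x2·L₂(x) + u_x3·L₃(x) + u_x4·L₄(x) + u_x5·L₅(x) + u_x6·L₆(x), where u_pt = (862564u₀ + 57249u₋₁ − 5058u₋₂ + 367u₋₃ + 57249u₁ − 5058u₂ + 367u₃)/967680, u_x = (−19083u₋₁ + 3372u₋₂ − 367u₋₃ + 19083u₁ − 3372u₂ + 367u₃)/26880, u_x2 = (−34380u₀ + 18625u₋₁ − 1546u₋₂ + 111u₋₃ + 18625u₁ − 1546u₂ + 111u₃)/26880, u_x3 = (229u₋₁ − 140u₋₂ + 17u₋₃ − 229u₁ + 140u₂ − 17u₃)/864, u_x4 = (2404u₀ − 1671u₋₁ + 510u₋₂ − 41u₋₃ − 1671u₁ + 510u₂ − 41u₃)/6336, u_x5 = (−5u₋₁ + 4u₋₂ − u₋₃ + 5u₁ − 4u₂ + u₃)/240, u_x6 = (−20u₀ + 15u₋₁ − 6u₋₂ + u₋₃ + 15u₁ − 6u₂ + u₃)/720. Then P(j) = u_j for every j ∈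 {−3, −2, −1, 0, 1, 2, 3}; i.e., P is the seventh-order pointwise interpolant on the large centered stencil. -/
/-- Legendre polynomial `L₁` shifted to `[−1/2, 1/2]`. -/
noncomputable def L1 (x : ℝ) : ℝ := x

/-- Legendre polynomial `L₂` shifted to `[−1/2, 1/2]`. -/
noncomputable def L2 (x : ℝ) : ℝ := x ^ 2 - 1 / 12

/-- Legendre polynomial `L₃` shifted to `[−1/2, 1/2]`. -/
noncomputable def L3 (x : ℝ) : ℝ := x ^ 3 - (3 / 20) * x

/-- Legendre polynomial `L₄` shifted to `[−1/2, 1/2]`. -/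
noncomputable def L4 (x : ℝ) : ℝ := x ^ 4 - (3 / 14) * x ^ 2 + 3 / 560

/-- Legendre polynomial `L₅` shifted to `[−1/2, 1/2]`. -/
noncomputable def L5 (x : ℝ) : ℝ := x ^ 5 - (5 / 18) * x ^ 3 + (5 / 336) * x

/-- Legendre polynomial `L₆` shifted to `[−1/2, 1/2]`. -/
noncomputable def L6 (x : ℝ) : ℝ :=
  x ^ 6 - (15 / 44) * x ^ 4 + (5 / 176) * x ^ 2 - 5 / 14784

/-- The seventh-order pointwise interpolant on the large centered stencil matches the point
values `u₋₃, …, u₃` at `−3, …, 3`. -/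
theorem weno7_central_pointwise_interpolation (um3 um2 um1 u0 u1 u2 u3 : ℝ)
    (P : ℝ → ℝ)
    (hP : ∀ x, P x =
        (862564 * u0 + 57249 * um1 - 5058 * um2 + 367 * um3
          + 57249 * u1 - 5058 * u2 + 367 * u3) / 967680
        + ((-19083 * um1 + 3372 * um2 - 367 * um3
          + 19083 * u1 - 3372 * u2 + 367 * u3) / 26880) * L1 x
        + ((-34380 * u0 + 18625 * um1 - 1546 * um2 + 111 * um3
          + 18625 * u1 - 1546 * u2 + 111 * u3) / 26880) * L2 x
        + ((229 * um1 - 140 * um2 + 17 * um3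
          - 229 * u1 + 140 * u2 - 17 * u3) / 864) * L3 x
        + ((2404 * u0 - 1671 * um1 + 510 * um2 - 41 * um3
          - 1671 * u1 + 510 * u2 - 41 * u3) / 6336) * L4 x
        + ((-5 * um1 + 4 * um2 - um3 + 5 * u1 - 4 * u2 + u3) / 240) * L5 x
        + ((-20 * u0 + 15 * um1 - 6 * um2 + um3
          + 15 * u1 - 6 * u2 + u3) / 720) * L6 x) :
    P (-3) = um3 ∧ P (-2) = um2 ∧ P (-1) = um1 ∧ P 0 = u0 ∧
      P 1 = u1 ∧ P 2 = u2 ∧ P 3 = u3 := by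
  refine ⟨?_, ?_, ?_, ?_, ?_, ?_, ?_⟩ <;>
    simp only [hP, L1, L2, L3, L4, L5, L6] <;> ring
end

section
/- Let f₋₂, f₋₁, f₀, f₁, f₂, f₃ be real numbers (zone-centered values at the points −5/2, −3/2, −1/2, 1/2, 3/2, 5/2, with the origin at the zone boundary between zone 0 and zone 1) and define the quintic polynomial P(x) = f_pt + f_x·L₁(x) + f_x2·L₂(x) + f_x3·L₃(x) + f_x4·L₄(x) + f_x5·L₅(x), where f_pt = (802f₀ − 93f₋₁ + 11f₋₂ + 802f₁ − 93f₂ + 11f₃)/1440, f_x = (−1794f₀ + 43f₋₁ − 3f₋₂ + 1794f₁ − 43f₂ + 3f₃)/1680, f_x2 = (−29f₀ + 33f₋₁ − 4f₋₂ − 29f₁ + 33f₂ − 4f₃)/84, f_x3 = (37f₀ − 14f₋₁ + f₋₂ − 37f₁ + 14f₂ − f₃)/54, f_x4 = (2f₀ − 3f₋₁ + f₋₂ + 2f₁ − 3f₂ + f₃)/48, f_x5 = (−10f₀ + 5f₋₁ − f₋₂ + 10f₁ − 5f₂ + f₃)/120. Then P(−5/2) = f₋₂, P(−3/2) = f₋₁,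 P(−1/2) = f₀, P(1/2) = f₁, P(3/2) = f₂, P(5/2) = f₃; i.e., P is the sixth-order zone-boundary interpolant on the centered six-point stencil. -/
/-- The sixth-order zone-boundary interpolant on the centered six-point stencil matches
the zone-centered values `f₋₂, …, f₃` at `−5/2, −3/2, −1/2, 1/2, 3/2, 5/2`. -/
theorem weno6_zone_boundary_interpolation (fm2 fm1 f0 f1 f2 f3 : ℝ)
    (P : ℝ → ℝ)
    (hP : ∀ x, P x =
        (802 * f0 - 93 * fm1 + 11 * fm2 + 802 * f1 - 93 * f2 + 11 * f3) / 1440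
        + ((-1794 * f0 + 43 * fm1 - 3 * fm2 + 1794 * f1 - 43 * f2 + 3 * f3) / 1680) * L1 x
        + ((-29 * f0 + 33 * fm1 - 4 * fm2 - 29 * f1 + 33 * f2 - 4 * f3) / 84) * L2 x
        + ((37 * f0 - 14 * fm1 + fm2 - 37 * f1 + 14 * f2 - f3) / 54) * L3 x
        + ((2 * f0 - 3 * fm1 + fm2 + 2 * f1 - 3 * f2 + f3) / 48) * L4 x
        + ((-10 * f0 + 5 * fm1 - fm2 + 10 * f1 - 5 * f2 + f3) / 120) * L5 x) :
    P (-5 / 2) = fm2 ∧ P (-3 / 2) = fm1 ∧ P (-1 / 2) = f0 ∧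
      P (1 / 2) = f1 ∧ P (3 / 2) = f2 ∧ P (5 / 2) = f3 := by
  refine ⟨?_, ?_, ?_, ?_, ?_, ?_⟩ <;>
    simp only [hP, L1, L2, L3, L4, L5] <;> ring
end
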